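/- Fix an fLTL\GU formula φ, a U-free subformula ξ ∈ sf(φ), an infinite word w, and R̲, R̄ ⊆ Rec with R̲ ⊆ R(w) ⊆ R̄. Then: (1) if w ∈ L(S_GF(ξ,R̲)) then w ⊨ GFξ, and if w ⊨ GFξ then w ∈ L(S_GF(ξ,R̄)); (2) if w ∈ L(S_FG(ξ,R̲)) then w ⊨ FGξ, and if w ⊨ FGξ then w ∈ L(S_FG(ξ,R̄)); (3) if w ∈ L(S_{G^{⋈p}_ext}(ξ,R̲)) then w ⊨ G^{⋈p}_ext ξ, and if w ⊨ G^{⋈p}_ext ξ then w ∈ L(S_{G^{⋈p}_ext}(ξ,R̄)). -/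

import Mathlib

open Filter

attribute [local instance] Classical.propDecidable

noncomputable section

namespace Paper

/-- Comparison extremes: limit inferior or limit superior. -/
inductive Ext where
  | inf : Ext
  | sup : Ext

/-- Comparison operators `≥` and `>`. -/
inductive Cmp where
  | ge : Cmp
  | gt : Cmp

/-- Interpretation of a comparison operator on reals. -/
def Cmp.rel : Cmp → ℝ → ℝ → Prop
  | .ge, x, y => x ≥ y
  | .gt, x, y => x > y

/-- Cesàro averages of a real sequence. -/
def cesaro (q : ℕ → ℝ) (n : ℕ) : ℝ := (∑ j ∈ Finset.range n, q j) / (n : ℝ)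

/-- `lr_inf`/`lr_sup`: liminf/limsup of the Cesàro averages. -/
def lr : Ext → (ℕ → ℝ) → ℝ
  | .inf, q => Filter.liminf (cesaro q) Filter.atTop
  | .sup, q => Filter.limsup (cesaro q) Filter.atTop

/-- Real-valued indicator of a proposition. -/
def ind (P : Prop) : ℝ := if P then 1 else 0

/-- Formulas of frequency LTL (fLTL) over atomic propositions `Ap`,
in negation normal form. -/
inductive FLTL (Ap : Type) where
  | tt : FLTL Ap
  | ff : FLTL Ap
  | atom (a : Ap) : FLTL Ap
  | natom (a : Ap) : FLTL Ap
  | conj (φ ψ : FLTL Ap) : FLTL Ap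
  | disj (φ ψ : FLTL Ap) : FLTL Ap
  | next (φ : FLTL Ap) : FLTL Ap
  | fut (φ : FLTL Ap) : FLTL Ap
  | glob (φ : FLTL Ap) : FLTL Ap
  | untl (φ ψ : FLTL Ap) : FLTL Ap
  | freq (e : Ext) (c : Cmp) (p : ℚ) (φ : FLTL Ap) : FLTL Ap

/-- Infinite words over the alphabet `2^Ap`. -/
abbrev Word (Ap : Type) := ℕ → Set Ap

/-- The suffix `w^k` of an infinite word. -/
def suffixW {Ap : Type} (w : Word Ap) (k : ℕ) : Word Ap := fun i => w (k + i)

/-- Semantics of fLTL: `Sat φ w` means `w ⊨ φ`. -/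
def Sat {Ap : Type} : FLTL Ap → Word Ap → Prop
  | .tt, _ => True
  | .ff, _ => False
  | .atom a, w => a ∈ w 0
  | .natom a, w => a ∉ w 0
  | .conj φ ψ, w => Sat φ w ∧ Sat ψ w
  | .disj φ ψ, w => Sat φ w ∨ Sat ψ w
  | .next φ, w => Sat φ (suffixW w 1)
  | .fut φ, w => ∃ k, Sat φ (suffixW w k)
  | .glob φ, w => ∀ k, Sat φ (suffixW w k)
  | .untl φ ψ, w => ∃ k, Sat ψ (suffixW w k) ∧ ∀ j < k, Sat φ (suffixW w j)
  | .freq e c p φ, w => c.rel (lr e (fun i => ind (Sat φ (suffixW w i)))) (p : ℝ)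

/-- `U`-free formulas (the grammar `ξ` of the fragment). -/
def UFree {Ap : Type} : FLTL Ap → Prop
  | .conj φ ψ => UFree φ ∧ UFree ψ
  | .disj φ ψ => UFree φ ∧ UFree ψ
  | .next φ => UFree φ
  | .fut φ => UFree φ
  | .glob φ => UFree φ
  | .freq _ _ _ φ => UFree φ
  | .untl _ _ => False
  | _ => True

/-- The fragment fLTL∖GU: no `U` inside the scope of `G` or `G^{⋈p}_ext`. -/
def InFrag {Ap : Type} : FLTL Ap → Prop
  | .conj φ ψ => InFrag φ ∧ InFrag ψ
  | .disj φ ψ => InFrag φ ∧ InFrag ψ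
  | .next φ => InFrag φ
  | .fut φ => InFrag φ
  | .untl φ ψ => InFrag φ ∧ InFrag ψ
  | .glob φ => UFree φ
  | .freq _ _ _ φ => UFree φ
  | _ => True

/-- One-step unfolding `Unf`. -/
def unf {Ap : Type} : FLTL Ap → FLTL Ap
  | .conj φ ψ => .conj (unf φ) (unf ψ)
  | .disj φ ψ => .disj (unf φ) (unf ψ)
  | .fut φ => .disj (unf φ) (.next (.fut φ))
  | .glob φ => .conj (unf φ) (.next (.glob φ))
  | .untl φ ψ => .disj (unf ψ) (.conj (unf φ) (.next (.untl φ ψ)))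
  | .freq e c p φ => .conj .tt (.next (.freq e c p φ))
  | φ => φ

/-- The next-step operator `ψ[ν]` for a letter `ν ⊆ Ap`. -/
def step {Ap : Type} : FLTL Ap → Set Ap → FLTL Ap
  | .conj φ ψ, ν => .conj (step φ ν) (step ψ ν)
  | .disj φ ψ, ν => .disj (step φ ν) (step ψ ν)
  | .atom a, ν => if a ∈ ν then .tt else .ff
  | .natom a, ν => if a ∈ ν then .ff else .tt
  | .next φ, _ => φ
  | φ, _ => φ

/-- Non-Boolean formulas: those that are not conjunctions or disjunctions. -/
def nonBool {Ap : Type} : FLTL Ap → Prop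
  | .conj _ _ => False
  | .disj _ _ => False
  | _ => True

/-- Extension of a propositional assignment (on non-Boolean formulas)
through conjunction and disjunction; `tt` and `ff` get their truth values. -/
def evalA {Ap : Type} (A : FLTL Ap → Prop) : FLTL Ap → Prop
  | .tt => True
  | .ff => False
  | .conj φ ψ => evalA A φ ∧ evalA A ψ
  | .disj φ ψ => evalA A φ ∨ evalA A ψ
  | φ => A φ

/-- Propositional provability `Φ ⊢ ψ`. -/
def pproves {Ap : Type} (Φ : Set (FLTL Ap)) (ψ : FLTL Ap) : Prop :=
  ∀ A : FLTL Ap → Prop, (∀ χ ∈ Φ, evalA A χ) → evalA A ψ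

/-- Propositional equivalence `≡_P`. -/
def pequiv {Ap : Type} (φ ψ : FLTL Ap) : Prop :=
  pproves {φ} ψ ∧ pproves {ψ} φ

/-- The set of subformulas of a formula (including itself). -/
def subf {Ap : Type} : FLTL Ap → Set (FLTL Ap)
  | .conj φ ψ => insert (.conj φ ψ) (subf φ ∪ subf ψ)
  | .disj φ ψ => insert (.disj φ ψ) (subf φ ∪ subf ψ)
  | .next φ => insert (.next φ) (subf φ)
  | .fut φ => insert (.fut φ) (subf φ)
  | .glob φ => insert (.glob φ) (subf φ)
  | .untl φ ψ => insert (.untl φ ψ) (subf φ ∪ subf ψ)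
  | .freq e c p φ => insert (.freq e c p φ) (subf φ)
  | φ => {φ}

/-- `sf(φ)`: the set of non-Boolean subformulas of `φ`. -/
def sfSet {Ap : Type} (φ : FLTL Ap) : Set (FLTL Ap) := {ψ ∈ subf φ | nonBool ψ}

/-- Formulas of the shapes `Fξ`, `Gξ`, `G^{⋈p}_ext ξ`. -/
def isRecShape {Ap : Type} : FLTL Ap → Prop
  | .fut _ => True
  | .glob _ => True
  | .freq _ _ _ _ => True
  | _ => False

/-- `Rec`: the set of `F`-, `G`-, and `G^{⋈p}_ext`-subformulas of `φ`. -/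
def RecSet {Ap : Type} (φ : FLTL Ap) : Set (FLTL Ap) := {ψ ∈ subf φ | isRecShape ψ}

/-- The defining condition of membership in `R(w)`. -/
def RsatCond {Ap : Type} (w : Word Ap) : FLTL Ap → Prop
  | .fut ξ => Sat (.glob (.fut ξ)) w
  | .glob ξ => Sat (.fut (.glob ξ)) w
  | .freq e c p ξ => Sat (.freq e c p ξ) w
  | _ => False

/-- `R(w)`: elements of `Rec` eventually always satisfied on `w`. -/
def Rsat {Ap : Type} (φ : FLTL Ap) (w : Word Ap) : Set (FLTL Ap) :=
  {ψ ∈ RecSet φ | RsatCond w ψ}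

/-- The threshold `T(w)`: the smallest `T` such that for all `t ≥ T` every
formula of `R(w)` holds at `w^t` and every formula of `Rec ∖ R(w)` fails at `w^t`. -/
def threshold {Ap : Type} (φ : FLTL Ap) (w : Word Ap) : ℕ :=
  sInf {T : ℕ | ∀ t, T ≤ t →
    (∀ ψ ∈ Rsat φ w, Sat ψ (suffixW w t)) ∧
    (∀ ψ ∈ RecSet φ, ψ ∉ Rsat φ w → ¬ Sat ψ (suffixW w t))}

/-- Sinks of slave transition systems: `ψ[ν] = ψ` for every letter `ν`. -/
def isSink {Ap : Type} (ψ : FLTL Ap) : Prop := ∀ ν : Set Ap, step ψ ν = ψ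

/-- Run of the slave LTS `S(ξ)` on a finite word: undefined (`none`) as soon as
a transition from a sink would be needed. -/
def slaveRunList {Ap : Type} : FLTL Ap → List (Set Ap) → Option (FLTL Ap)
  | ψ, [] => some ψ
  | ψ, ν :: rest => if isSink ψ then none else slaveRunList (step ψ ν) rest

/-- The finite word `w[i] w[i+1] ⋯ w[i+len-1]`. -/
def segWord {Ap : Type} (w : Word Ap) (i len : ℕ) : List (Set Ap) :=
  (List.range len).map (fun k => w (i + k))

/-- `S(ξ)(w[i..j])`: the state of the slave LTS after reading `w[i]⋯w[j]`. -/
def readSeg {Ap : Type} (ξ : FLTL Ap) (w : Word Ap) (i j : ℕ) : Option (FLTL Ap) :=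
  slaveRunList ξ (segWord w i (j + 1 - i))

/-- The state, at time `n`, of the slave token born at time `b`
(having read `w[b]⋯w[n-1]`). -/
def tokState {Ap : Type} (ξ : FLTL Ap) (w : Word Ap) (b n : ℕ) : Option (FLTL Ap) :=
  slaveRunList ξ (segWord w b (n - b))

/-- `Sat(R)`: positions from which the slave run reaches an `R`-provable state. -/
def SatSet {Ap : Type} (R : Set (FLTL Ap)) (ξ : FLTL Ap) (w : Word Ap) : Set ℕ :=
  {i | ∃ j ≥ i, ∃ ψ, readSeg ξ w i j = some ψ ∧ pproves R ψ}

/-- The token (subset-construction) run of the slave automata for `ξ` on `w`: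
at each step all non-sink tokens move and a fresh token is put on `ξ`. -/
def tokenSet {Ap : Type} (ξ : FLTL Ap) (w : Word Ap) : ℕ → Set (FLTL Ap)
  | 0 => {ξ}
  | n + 1 => insert ξ ((fun ψ => step ψ (w n)) '' {ψ ∈ tokenSet ξ w n | ¬ isSink ψ})

/-- Acceptance of the Büchi slave automaton `S_GF(ξ,R)`:
infinitely often some token lies in an accepting (R-provable) sink. -/
def buchiAcc {Ap : Type} (R : Set (FLTL Ap)) (ξ : FLTL Ap) (w : Word Ap) : Prop :=
  ∃ᶠ n in atTop, ∃ ψ ∈ tokenSet ξ w n, isSink ψ ∧ pproves R ψ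

/-- Acceptance of the co-Büchi slave automaton `S_FG(ξ,R)`:
only finitely often some token lies in a rejecting (non-R-provable) sink. -/
def coBuchiAcc {Ap : Type} (R : Set (FLTL Ap)) (ξ : FLTL Ap) (w : Word Ap) : Prop :=
  ∀ᶠ n in atTop, ¬ ∃ ψ ∈ tokenSet ξ w n, isSink ψ ∧ ¬ pproves R ψ

/-- The counting function (state of the mean-payoff slave automaton) at time `n`:
the number of tokens currently in state `ψ`. -/
def tokenCount {Ap : Type} (ξ : FLTL Ap) (w : Word Ap) (n : ℕ) (ψ : FLTL Ap) : ℕ :=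
  ((Finset.range (n + 1)).filter (fun b => tokState ξ w b n = some ψ)).card

/-- The reward `r(R)` of a counting state: total number of tokens in
accepting (R-provable) sinks. -/
def mpRewardFn {Ap : Type} (R : Set (FLTL Ap)) (f : FLTL Ap → ℕ) : ℝ :=
  ∑' ψ : {χ : FLTL Ap // isSink χ ∧ pproves R χ}, (f ψ.1 : ℝ)

/-- Acceptance of the mean-payoff slave automaton `S_{G^{⋈p}_ext}(ξ,R)`. -/
def mpAcc {Ap : Type} (R : Set (FLTL Ap)) (ξ : FLTL Ap) (w : Word Ap)
    (e : Ext) (c : Cmp) (p : ℚ) : Prop :=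
  c.rel (lr e (fun n => mpRewardFn R (tokenCount ξ w n))) (p : ℝ)

/-- Acceptance of the slave automaton for a formula of `Rec`, with assumptions `R`. -/
def slaveAccept {Ap : Type} (R : Set (FLTL Ap)) (w : Word Ap) : FLTL Ap → Prop
  | .fut ξ => buchiAcc R ξ w
  | .glob ξ => coBuchiAcc R ξ w
  | .freq e c p ξ => mpAcc R ξ w e c p
  | _ => True

/-- `w ∈ L(P(R))`: the product of the slaves accepts `w` with the condition
`Acc(R) = ⋀_{ξ ∈ R} Acc_ξ(R)`. -/
def productAccept {Ap : Type} (R : Set (FLTL Ap)) (w : Word Ap) : Prop :=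
  ∀ ψ ∈ R, slaveAccept R w ψ

/-- The run of the master transition system on `w`. -/
def masterRun {Ap : Type} (φ : FLTL Ap) (w : Word Ap) : ℕ → FLTL Ap
  | 0 => φ
  | n + 1 => step (unf (masterRun φ w n)) (w n)

/-- The propositional substitution `χ[X/ff]`: replace each non-Boolean
formula belonging to `X` by `ff`. -/
def substFF {Ap : Type} (X : Set (FLTL Ap)) : FLTL Ap → FLTL Ap
  | .conj φ ψ => .conj (substFF X φ) (substFF X ψ)
  | .disj φ ψ => .disj (substFF X φ) (substFF X ψ)
  | φ => if φ ∈ X then .ff else φ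

/-- The master acceptance condition `Acc_M(R)`: eventually, the current master
formula is provable from `R` together with all tokens of the slaves of
`G`-formulas of `R`, with `Rec ∖ R` substituted by `ff`. -/
def masterAcc {Ap : Type} (φ : FLTL Ap) (R : Set (FLTL Ap)) (w : Word Ap) : Prop :=
  ∀ᶠ n in atTop,
    pproves
      (R ∪ ⋃ (ξ : FLTL Ap) (_ : FLTL.glob ξ ∈ R),
        substFF (RecSet φ \ R) '' tokenSet ξ w n)
      (masterRun φ w n)

/-- `w ∈ L(A)` for the final automaton `A` (master × slave product) of `φ`. -/
def finalAccept {Ap : Type} (φ : FLTL Ap) (w : Word Ap) : Prop :=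
  ∃ R ⊆ RecSet φ, masterAcc φ R w ∧ productAccept R w

/-!
Beyond the threshold `T(w)` every formula of `Rec` has stabilised: it holds at `w^t` iff it
belongs to `R(w)`. Reading a letter with `step` therefore preserves the truth value of a `U`-free
formula whose temporal leaves lie in `Rec`, so the token born at a time `b ≥ T(w)` reaches, after
at most `nextDepth ξ` steps, a sink that is `R(w)`-provable iff `w^b ⊨ ξ`. With `R = R(w)` the
Büchi, co-Büchi and mean-payoff conditions thus express exactly `GFξ`, `FGξ` and the frequency
of `ξ`; for the mean payoff, the reward of a token is merely delayed by a bounded time, which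
does not change Cesàro limits. All three conditions are monotone in `R`.
-/

/-! ### Cesàro averages -/

lemma liminf_add_of_tendsto_zero {u d : ℕ → ℝ} (hu : atTop.IsBoundedUnder (· ≤ ·) u)
    (hu' : atTop.IsBoundedUnder (· ≥ ·) u) (hd : Tendsto d atTop (nhds 0)) :
    liminf (u + d) atTop = liminf u atTop := by
  have hd₀ : liminf d atTop = 0 := hd.liminf_eq
  have hd₁ : limsup d atTop = 0 := hd.limsup_eq
  refine le_antisymm ?_ ?_
  · simpa [add_comm u, hd₁] using liminf_add_le hd.isBoundedUnder_ge hd.isBoundedUnder_le hu'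
      hu.isCoboundedUnder_ge
  · simpa [hd₀] using le_liminf_add hu' hu hd.isBoundedUnder_ge
      hd.isBoundedUnder_le.isCoboundedUnder_ge

lemma limsup_add_of_tendsto_zero {u d : ℕ → ℝ} (hu : atTop.IsBoundedUnder (· ≤ ·) u)
    (hu' : atTop.IsBoundedUnder (· ≥ ·) u) (hd : Tendsto d atTop (nhds 0)) :
    limsup (u + d) atTop = limsup u atTop := by
  have hd₀ : liminf d atTop = 0 := hd.liminf_eq
  have hd₁ : limsup d atTop = 0 := hd.limsup_eq
  refine le_antisymm ?_ ?_
  · simpa [hd₁] using limsup_add_le hu' hu hd.isBoundedUnder_ge.isCoboundedUnder_le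
      hd.isBoundedUnder_le
  · simpa [hd₀] using le_limsup_add hu hu'.isCoboundedUnder_le hd.isBoundedUnder_le
      hd.isBoundedUnder_ge

section Cesaro

variable {q r : ℕ → ℝ} {B : ℝ}

lemma abs_cesaro_le (hr : ∀ i, |r i| ≤ B) (n : ℕ) : |cesaro r n| ≤ B := by
  rcases Nat.eq_zero_or_pos n with rfl | hn
  · simpa [cesaro] using (abs_nonneg _).trans (hr 0)
  · have hn' : (0 : ℝ) < n := by exact_mod_cast hn
    rw [cesaro, abs_div, Nat.abs_cast, div_le_iff₀ hn']
    calc |∑ j ∈ Finset.range n, r j| ≤ ∑ j ∈ Finset.range n, |r j| :=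
          Finset.abs_sum_le_sum_abs _ _
      _ ≤ ∑ _j ∈ Finset.range n, B := Finset.sum_le_sum fun j _ => hr j
      _ = B * n := by simp [mul_comm]

lemma isBoundedUnder_le_cesaro (hr : ∀ i, |r i| ≤ B) :
    atTop.IsBoundedUnder (· ≤ ·) (cesaro r) :=
  isBoundedUnder_of ⟨B, fun n => (abs_le.1 (abs_cesaro_le hr n)).2⟩

lemma isBoundedUnder_ge_cesaro (hr : ∀ i, |r i| ≤ B) :
    atTop.IsBoundedUnder (· ≥ ·) (cesaro r) :=
  isBoundedUnder_of ⟨-B, fun n => (abs_le.1 (abs_cesaro_le hr n)).1⟩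

lemma lr_eq_of_abs_sum_sub_le (hr : ∀ i, |r i| ≤ B) {C : ℝ}
    (h : ∀ n, |∑ i ∈ Finset.range n, q i - ∑ i ∈ Finset.range n, r i| ≤ C) (e : Ext) :
    lr e q = lr e r := by
  have hd : Tendsto (cesaro q - cesaro r) atTop (nhds 0) := by
    refine squeeze_zero_norm' ?_ (tendsto_const_div_atTop_nhds_zero_nat C)
    filter_upwards [eventually_gt_atTop 0] with n hn
    have hn' : (0 : ℝ) < n := by exact_mod_cast hn
    rw [Pi.sub_apply, cesaro, cesaro, ← sub_div, Real.norm_eq_abs, abs_div, Nat.abs_cast]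
    exact div_le_div_of_nonneg_right (h n) hn'.le
  have hq : cesaro q = cesaro r + (cesaro q - cesaro r) := by abel
  cases e
  · rw [lr, lr, hq, liminf_add_of_tendsto_zero (isBoundedUnder_le_cesaro hr)
      (isBoundedUnder_ge_cesaro hr) hd]
  · rw [lr, lr, hq, limsup_add_of_tendsto_zero (isBoundedUnder_le_cesaro hr)
      (isBoundedUnder_ge_cesaro hr) hd]

lemma lr_mono (h : ∀ i, q i ≤ r i) (hq : ∀ i, |q i| ≤ B) (hr : ∀ i, |r i| ≤ B)
    (e : Ext) :
    lr e q ≤ lr e r := by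
  have hle : ∀ n, cesaro q n ≤ cesaro r n := fun n =>
    div_le_div_of_nonneg_right (Finset.sum_le_sum fun i _ => h i) n.cast_nonneg
  cases e
  · exact liminf_le_liminf (Eventually.of_forall hle) (isBoundedUnder_ge_cesaro hq)
      (isBoundedUnder_le_cesaro hr).isCoboundedUnder_ge
  · exact limsup_le_limsup (Eventually.of_forall hle)
      (isBoundedUnder_ge_cesaro hq).isCoboundedUnder_le (isBoundedUnder_le_cesaro hr)

lemma lr_eq_of_eventuallyEq (hr : ∀ i, |r i| ≤ B) (h : q =ᶠ[atTop] r) (e : Ext) :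
    lr e q = lr e r := by
  obtain ⟨T, hT⟩ := eventually_atTop.1 h
  refine lr_eq_of_abs_sum_sub_le hr (C := ∑ i ∈ Finset.range T, |q i - r i|) (fun n => ?_) e
  rw [← Finset.sum_sub_distrib]
  refine (Finset.abs_sum_le_sum_abs _ _).trans ?_
  calc ∑ i ∈ Finset.range n, |q i - r i|
      ≤ ∑ i ∈ Finset.range (max n T), |q i - r i| :=
        Finset.sum_le_sum_of_subset_of_nonneg (by simp) fun _ _ _ => abs_nonneg _
    _ = ∑ i ∈ Finset.range T, |q i - r i| :=
        (Finset.sum_subset (by simp) fun i _ hi => by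
          simp [hT i (by simpa using hi)]).symm

lemma abs_sum_range_le (hq : ∀ i, |q i| ≤ B) (t k : ℕ) :
    |∑ i ∈ Finset.range t, q (k + i)| ≤ t * B :=
  (Finset.abs_sum_le_sum_abs _ _).trans
    ((Finset.sum_le_sum (s := Finset.range t) fun i _ => hq (k + i)).trans_eq (by simp))

lemma lr_comp_add (hq : ∀ i, |q i| ≤ B) (t : ℕ) (e : Ext) :
    lr e (fun i => q (t + i)) = lr e q := by
  refine lr_eq_of_abs_sum_sub_le hq (C := t * B + t * B) (fun n => ?_) e
  have h₁ := Finset.sum_range_add q t n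
  have h₂ := Finset.sum_range_add q n t
  rw [add_comm t n] at h₁
  have hsplit : ∑ i ∈ Finset.range n, q (t + i) - ∑ i ∈ Finset.range n, q i
      = ∑ i ∈ Finset.range t, q (n + i) - ∑ i ∈ Finset.range t, q (0 + i) := by
    simp only [zero_add]; linarith
  rw [hsplit]
  exact (abs_sub _ _).trans (add_le_add (abs_sum_range_le hq t n) (abs_sum_range_le hq t 0))

/-- Delaying the reward earned at time `b` to time `b + d b`, with bounded delay `d`,
does not change `lr`. -/
lemma lr_delay {d : ℕ → ℕ} {H : ℕ} (hd : ∀ b, d b ≤ H) (hq : ∀ i, |q i| ≤ B)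
    (e : Ext) :
    lr e (fun n => ∑ b ∈ Finset.range (n + 1), if b + d b = n then q b else 0) = lr e q := by
  refine lr_eq_of_abs_sum_sub_le hq (C := H * B) (fun N => ?_) e
  have hswap :
      ∑ n ∈ Finset.range N, ∑ b ∈ Finset.range (n + 1), (if b + d b = n then q b else 0)
      = ∑ b ∈ Finset.range N, if b + d b < N then q b else 0 := by
    rw [Finset.sum_comm' (t' := Finset.range N) (s' := fun b => Finset.Ico b N)
      (fun n b => by simp only [Finset.mem_range, Finset.mem_Ico]; omega)]
    refine Finset.sum_congr rfl fun b _ => ?_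
    rw [Finset.sum_ite_eq]
    simp
  have hlate :
      ∑ b ∈ Finset.range N, (if b + d b < N then q b else 0) - ∑ b ∈ Finset.range N, q b
      = -∑ b ∈ (Finset.range N).filter (fun b => N ≤ b + d b), q b := by
    rw [Finset.sum_filter, ← Finset.sum_neg_distrib, ← Finset.sum_sub_distrib]
    refine Finset.sum_congr rfl fun b _ => ?_
    split_ifs <;> first | omega | ring
  have hcard : ((Finset.range N).filter (fun b => N ≤ b + d b)).card ≤ H :=
    (Finset.card_le_card (t := Finset.Ico (N - H) N) fun b hb => by
      simp only [Finset.mem_filter, Finset.mem_range, Finset.mem_Ico] at hb ⊢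
      have := hd b; omega).trans (by simp only [Nat.card_Ico]; omega)
  rw [hswap, hlate, abs_neg]
  refine (Finset.abs_sum_le_sum_abs _ _).trans ((Finset.sum_le_card_nsmul _ _ B
    fun b _ => hq b).trans ?_)
  rw [nsmul_eq_mul]
  exact mul_le_mul_of_nonneg_right (by exact_mod_cast hcard) ((abs_nonneg _).trans (hq 0))

end Cesaro

lemma Cmp.rel_mono {c : Cmp} {x y p : ℝ} (hxy : x ≤ y) (h : c.rel x p) : c.rel y p := by
  cases c
  · exact le_trans h hxy
  · exact lt_of_lt_of_le h hxy

lemma abs_ind_le_one (P : Prop) : |ind P| ≤ 1 := by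
  unfold ind; split <;> norm_num

lemma ind_mono {P Q : Prop} (h : P → Q) : ind P ≤ ind Q := by
  unfold ind; split_ifs <;> simp_all

lemma eventually_exists_add_iff_frequently (P : ℕ → Prop) :
    ∀ᶠ t in atTop, (∃ m, P (t + m)) ↔ ∃ᶠ i in atTop, P i := by
  by_cases h : ∃ᶠ i in atTop, P i
  · refine Eventually.of_forall fun t => iff_of_true ?_ h
    obtain ⟨i, hi, hP⟩ := frequently_atTop.1 h t
    exact ⟨i - t, by rwa [Nat.add_sub_cancel' hi]⟩
  · obtain ⟨N, hN⟩ := eventually_atTop.1 (not_frequently.1 h)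
    filter_upwards [eventually_ge_atTop N] with t ht
    exact iff_of_false (fun ⟨m, hm⟩ => hN (t + m) (by omega) hm) h

lemma eventually_forall_add_iff_eventually (P : ℕ → Prop) :
    ∀ᶠ t in atTop, (∀ m, P (t + m)) ↔ ∀ᶠ i in atTop, P i := by
  filter_upwards [eventually_exists_add_iff_frequently (fun i => ¬ P i)] with t ht
  rw [← not_iff_not, not_forall, not_eventually]
  exact ht

lemma frequently_exists_add_eq_iff {d : ℕ → ℕ} {H : ℕ} (hd : ∀ b, d b ≤ H)
    (P : ℕ → Prop) :
    (∃ᶠ n in atTop, ∃ b, b + d b = n ∧ P b) ↔ ∃ᶠ b in atTop, P b := by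
  simp only [frequently_atTop]
  refine ⟨fun h N => ?_, fun h N => ?_⟩
  · obtain ⟨_, hn, b, rfl, hb⟩ := h (N + H)
    exact ⟨b, by have := hd b; omega, hb⟩
  · obtain ⟨b, hb, hP⟩ := h N
    exact ⟨b + d b, by omega, b, rfl, hP⟩

variable {Ap : Type}

/-! ### Stabilisation beyond the threshold -/

lemma suffixW_suffixW (w : Word Ap) (a b : ℕ) :
    suffixW (suffixW w a) b = suffixW w (a + b) := by
  funext i
  simp [suffixW, Nat.add_assoc]

lemma sat_glob_fut_iff {ξ : FLTL Ap} {w : Word Ap} :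
    Sat (.glob (.fut ξ)) w ↔ ∃ᶠ i in atTop, Sat ξ (suffixW w i) := by
  simp only [Sat, suffixW_suffixW, frequently_atTop]
  exact ⟨fun h k => let ⟨m, hm⟩ := h k; ⟨k + m, by omega, hm⟩,
    fun h k => let ⟨i, hi, hs⟩ := h k; ⟨i - k, by rwa [Nat.add_sub_cancel' hi]⟩⟩

lemma sat_fut_glob_iff {ξ : FLTL Ap} {w : Word Ap} :
    Sat (.fut (.glob ξ)) w ↔ ∀ᶠ i in atTop, Sat ξ (suffixW w i) := by
  simp only [Sat, suffixW_suffixW, eventually_atTop]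
  exact ⟨fun ⟨k, hk⟩ => ⟨k, fun i hi => by
      simpa [Nat.add_sub_cancel' hi] using hk (i - k)⟩,
    fun ⟨k, hk⟩ => ⟨k, fun m => hk (k + m) (by omega)⟩⟩

lemma sat_freq_suffixW_iff {w : Word Ap} {e : Ext} {c : Cmp} {p : ℚ} {χ : FLTL Ap} (t : ℕ) :
    Sat (.freq e c p χ) (suffixW w t) ↔ Sat (.freq e c p χ) w := by
  simp only [Sat, suffixW_suffixW]
  rw [lr_comp_add (q := fun i => ind (Sat χ (suffixW w i))) (fun _ => abs_ind_le_one _)]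

lemma eventually_sat_suffixW_iff_RsatCond (w : Word Ap) {ψ : FLTL Ap} (hψ : isRecShape ψ) :
    ∀ᶠ t in atTop, Sat ψ (suffixW w t) ↔ RsatCond w ψ := by
  cases ψ with
  | fut χ =>
    rw [RsatCond, sat_glob_fut_iff]
    simpa only [Sat, suffixW_suffixW] using
      eventually_exists_add_iff_frequently fun i => Sat χ (suffixW w i)
  | glob χ =>
    rw [RsatCond, sat_fut_glob_iff]
    simpa only [Sat, suffixW_suffixW] using
      eventually_forall_add_iff_eventually fun i => Sat χ (suffixW w i)
  | freq e c p χ => exact Eventually.of_forall sat_freq_suffixW_iff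
  | _ => exact hψ.elim

lemma subf_subset_of_mem {φ χ : FLTL Ap} (h : χ ∈ subf φ) : subf χ ⊆ subf φ := by
  induction φ with
  | conj _ _ ih₁ ih₂ | disj _ _ ih₁ ih₂ | untl _ _ ih₁ ih₂ =>
    simp only [subf, Set.mem_insert_iff, Set.mem_union] at h
    rcases h with rfl | h | h
    · rfl
    · exact (ih₁ h).trans fun _ hx => by simp [subf, hx]
    · exact (ih₂ h).trans fun _ hx => by simp [subf, hx]
  | next _ ih | fut _ ih | glob _ ih | freq _ _ _ _ ih =>
    simp only [subf, Set.mem_insert_iff] at h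
    rcases h with rfl | h
    · rfl
    · exact (ih h).trans fun _ hx => by simp [subf, hx]
  | _ =>
    simp only [subf, Set.mem_singleton_iff] at h
    rw [h]

lemma subf_finite (φ : FLTL Ap) : (subf φ).Finite := by
  induction φ with
  | conj _ _ ih₁ ih₂ | disj _ _ ih₁ ih₂ | untl _ _ ih₁ ih₂ =>
    exact (ih₁.union ih₂).insert _
  | next _ ih | fut _ ih | glob _ ih | freq _ _ _ _ ih => exact ih.insert _
  | _ => exact Set.finite_singleton _

lemma sat_suffixW_iff_mem_Rsat {φ ψ : FLTL Ap} {w : Word Ap} {t : ℕ}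
    (ht : threshold φ w ≤ t) (hψ : ψ ∈ RecSet φ) :
    Sat ψ (suffixW w t) ↔ ψ ∈ Rsat φ w := by
  have hfin : (RecSet φ).Finite := (subf_finite φ).subset fun _ h => h.1
  obtain ⟨T, hT⟩ := eventually_atTop.1 <| (eventually_all_finite hfin).2 fun ψ hψ =>
    eventually_sat_suffixW_iff_RsatCond w hψ.2
  have hmem : threshold φ w ∈ _ := Nat.sInf_mem
    ⟨T, fun t ht => ⟨fun ψ hψ => (hT t ht ψ hψ.1).2 hψ.2,
      fun ψ hψ hn hs => hn ⟨hψ, (hT t ht ψ hψ).1 hs⟩⟩⟩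
  exact ⟨fun hs => by_contra fun hn => (hmem t ht).2 ψ hψ hn hs, (hmem t ht).1 ψ⟩

lemma pproves_mono {Φ Φ' : Set (FLTL Ap)} (h : Φ ⊆ Φ') {ψ : FLTL Ap} (hp : pproves Φ ψ) :
    pproves Φ' ψ :=
  fun A hA => hp A fun χ hχ => hA χ (h hχ)

lemma evalA_mono {A A' : FLTL Ap → Prop} (h : ∀ ψ, A ψ → evalA A' ψ) {χ : FLTL Ap} :
    evalA A χ → evalA A' χ := by
  induction χ with
  | tt | ff => exact id
  | conj _ _ ih₁ ih₂ => exact And.imp ih₁ ih₂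
  | disj _ _ ih₁ ih₂ => exact Or.imp ih₁ ih₂
  | _ => exact h _

lemma pproves_of_evalA_mem {R : Set (FLTL Ap)} {χ : FLTL Ap} (h : evalA (· ∈ R) χ) :
    pproves R χ :=
  fun _ hA => evalA_mono hA h

lemma evalA_sat_iff (v : Word Ap) (χ : FLTL Ap) : evalA (Sat · v) χ ↔ Sat χ v := by
  induction χ with
  | conj _ _ ih₁ ih₂ => exact and_congr ih₁ ih₂
  | disj _ _ ih₁ ih₂ => exact or_congr ih₁ ih₂
  | _ => rfl

lemma sat_of_pproves_Rsat {φ χ : FLTL Ap} {w : Word Ap} {t : ℕ} (ht : threshold φ w ≤ t)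
    (h : pproves (Rsat φ w) χ) : Sat χ (suffixW w t) :=
  (evalA_sat_iff _ χ).1 <| h _ fun ψ hψ =>
    (evalA_sat_iff _ ψ).2 ((sat_suffixW_iff_mem_Rsat ht hψ.1).2 hψ)

/-! ### Runs of the slave transition system -/

/-- An upper bound on the number of steps after which the slave run from a formula is in a
sink: literals are evaluated by one step, and each `X` is peeled by one step. -/
def nextDepth : FLTL Ap → ℕ
  | .atom _ | .natom _ => 1
  | .conj χ₁ χ₂ | .disj χ₁ χ₂ => max (nextDepth χ₁) (nextDepth χ₂)
  | .next χ => nextDepth χ + 1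
  | _ => 0

lemma nextDepth_step_le (χ : FLTL Ap) (ν : Set Ap) :
    nextDepth (step χ ν) ≤ nextDepth χ - 1 := by
  induction χ with
  | conj _ _ ih₁ ih₂ | disj _ _ ih₁ ih₂ => simp only [step, nextDepth]; omega
  | atom a | natom a => simp only [step]; split <;> simp [nextDepth]
  | _ => simp [step, nextDepth]

lemma isSink_iff_nextDepth_eq_zero {χ : FLTL Ap} : isSink χ ↔ nextDepth χ = 0 := by
  refine ⟨fun h => ?_, fun h ν => ?_⟩
  · have := nextDepth_step_le χ ∅
    rw [h ∅] at this
    omega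
  · induction χ with
    | conj _ _ ih₁ ih₂ | disj _ _ ih₁ ih₂ =>
      simp only [nextDepth, Nat.max_eq_zero_iff] at h
      simp [step, ih₁ h.1, ih₂ h.2]
    | atom a | natom a | next _ => simp [nextDepth] at h
    | _ => rfl

/-- Unlike `slaveRunList`, this run continues through sinks, which is harmless since sinks are
fixed points of `step`. -/
def slaveRun (w : Word Ap) (ξ : FLTL Ap) (b : ℕ) : ℕ → FLTL Ap
  | 0 => ξ
  | m + 1 => step (slaveRun w ξ b m) (w (b + m))

lemma nextDepth_slaveRun_le (w : Word Ap) (ξ : FLTL Ap) (b m : ℕ) :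
    nextDepth (slaveRun w ξ b m) ≤ nextDepth ξ - m := by
  induction m with
  | zero => simp [slaveRun]
  | succ m ih =>
    have := nextDepth_step_le (slaveRun w ξ b m) (w (b + m))
    simp only [slaveRun]
    omega

lemma isSink_slaveRun_nextDepth (w : Word Ap) (ξ : FLTL Ap) (b : ℕ) :
    isSink (slaveRun w ξ b (nextDepth ξ)) :=
  isSink_iff_nextDepth_eq_zero.2 <| by have := nextDepth_slaveRun_le w ξ b (nextDepth ξ); omega

lemma exists_isSink_slaveRun (w : Word Ap) (ξ : FLTL Ap) (b : ℕ) :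
    ∃ m, isSink (slaveRun w ξ b m) :=
  ⟨_, isSink_slaveRun_nextDepth w ξ b⟩

def sinkTime (w : Word Ap) (ξ : FLTL Ap) (b : ℕ) : ℕ :=
  Nat.find (exists_isSink_slaveRun w ξ b)

def sinkState (w : Word Ap) (ξ : FLTL Ap) (b : ℕ) : FLTL Ap :=
  slaveRun w ξ b (sinkTime w ξ b)

lemma sinkTime_le_nextDepth (w : Word Ap) (ξ : FLTL Ap) (b : ℕ) :
    sinkTime w ξ b ≤ nextDepth ξ :=
  Nat.find_min' _ (isSink_slaveRun_nextDepth w ξ b)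

lemma isSink_sinkState (w : Word Ap) (ξ : FLTL Ap) (b : ℕ) : isSink (sinkState w ξ b) :=
  Nat.find_spec (exists_isSink_slaveRun w ξ b)

/-- The partial transition function `δ^S` of `S(ξ)`. -/
def slaveDelta (ψ : FLTL Ap) (ν : Set Ap) : Option (FLTL Ap) :=
  if isSink ψ then none else some (step ψ ν)

lemma slaveRunList_append_singleton (χ : FLTL Ap) (l : List (Set Ap)) (ν : Set Ap) :
    slaveRunList χ (l ++ [ν]) = (slaveRunList χ l).bind (slaveDelta · ν) := by
  induction l generalizing χ with
  | nil => simp [slaveRunList, slaveDelta]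
  | cons μ l ih => simp only [List.cons_append, slaveRunList]; split_ifs <;> simp [ih]

lemma tokState_self (ξ : FLTL Ap) (w : Word Ap) (b : ℕ) : tokState ξ w b b = some ξ := by
  simp [tokState, segWord, slaveRunList]

lemma tokState_succ (ξ : FLTL Ap) (w : Word Ap) {b n : ℕ} (hb : b ≤ n) :
    tokState ξ w b (n + 1) = (tokState ξ w b n).bind (slaveDelta · (w n)) := by
  obtain ⟨m, rfl⟩ := Nat.exists_eq_add_of_le hb
  rw [tokState, tokState, show b + m + 1 - b = m + 1 by omega, Nat.add_sub_cancel_left, segWord,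
    segWord, List.range_succ, List.map_append, List.map_singleton, slaveRunList_append_singleton]

lemma tokState_add_eq_some_iff {ξ ψ : FLTL Ap} {w : Word Ap} {b m : ℕ} :
    tokState ξ w b (b + m) = some ψ ↔ ψ = slaveRun w ξ b m ∧ m ≤ sinkTime w ξ b := by
  induction m generalizing ψ with
  | zero => simp [tokState_self, slaveRun, eq_comm]
  | succ m ih =>
    simp only [← Nat.add_assoc, tokState_succ ξ w (Nat.le_add_right b m),
      Option.bind_eq_some_iff, ih, slaveDelta, sinkTime, Nat.le_find_iff,
      Nat.lt_succ_iff_lt_or_eq, slaveRun]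
    constructor
    · rintro ⟨_, ⟨rfl, hm⟩, h⟩
      split_ifs at h with hs
      cases h
      exact ⟨rfl, fun k hk => hk.elim (hm k) fun hk => hk ▸ hs⟩
    · rintro ⟨rfl, hm⟩
      exact ⟨_, ⟨rfl, fun k hk => hm k (.inl hk)⟩, by simp [hm m (.inr rfl)]⟩

lemma tokState_eq_some_and_isSink_iff {ξ ψ : FLTL Ap} {w : Word Ap} {b n : ℕ} (hb : b ≤ n) :
    tokState ξ w b n = some ψ ∧ isSink ψ ↔
      b + sinkTime w ξ b = n ∧ ψ = sinkState w ξ b := by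
  obtain ⟨m, rfl⟩ := Nat.exists_eq_add_of_le hb
  rw [tokState_add_eq_some_iff, Nat.add_left_cancel_iff]
  constructor
  · rintro ⟨⟨rfl, hm⟩, hs⟩
    obtain rfl : sinkTime w ξ b = m := le_antisymm (Nat.find_min' _ hs) hm
    exact ⟨rfl, rfl⟩
  · rintro ⟨rfl, rfl⟩
    exact ⟨⟨rfl, le_rfl⟩, isSink_sinkState w ξ b⟩

lemma mem_tokenSet_iff {ξ ψ : FLTL Ap} {w : Word Ap} {n : ℕ} :
    ψ ∈ tokenSet ξ w n ↔ ∃ b ≤ n, tokState ξ w b n = some ψ := by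
  induction n generalizing ψ with
  | zero => simp [tokenSet, tokState_self, eq_comm]
  | succ n ih =>
    have hsplit : (∃ b ≤ n + 1, tokState ξ w b (n + 1) = some ψ) ↔
        ψ = ξ ∨ ∃ b ≤ n, tokState ξ w b (n + 1) = some ψ := by
      constructor
      · rintro ⟨b, hb, hts⟩
        rcases Nat.le_succ_iff.1 hb with hb | rfl
        · exact .inr ⟨b, hb, hts⟩
        · exact .inl (by simpa [tokState_self, eq_comm] using hts)
      · rintro (rfl | ⟨b, hb, hts⟩)
        · exact ⟨n + 1, le_rfl, tokState_self ψ w _⟩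
        · exact ⟨b, by omega, hts⟩
    simp only [tokenSet, Set.mem_insert_iff, Set.mem_image, ih, hsplit]
    refine or_congr_right ⟨?_, ?_⟩
    · rintro ⟨ψ', ⟨⟨b, hb, hts⟩, hs⟩, rfl⟩
      exact ⟨b, hb, by simp [tokState_succ ξ w hb, hts, slaveDelta, hs]⟩
    · rintro ⟨b, hb, hts⟩
      rw [tokState_succ ξ w hb, Option.bind_eq_some_iff] at hts
      obtain ⟨ψ', hts', hδ⟩ := hts
      simp only [slaveDelta] at hδ
      split_ifs at hδ with hs
      cases hδ
      exact ⟨ψ', ⟨⟨b, hb, hts'⟩, hs⟩, rfl⟩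

lemma exists_mem_tokenSet_isSink_iff {ξ : FLTL Ap} {w : Word Ap} {n : ℕ} (P : FLTL Ap → Prop) :
    (∃ ψ ∈ tokenSet ξ w n, isSink ψ ∧ P ψ) ↔
      ∃ b, b + sinkTime w ξ b = n ∧ P (sinkState w ξ b) := by
  simp only [mem_tokenSet_iff]
  constructor
  · rintro ⟨ψ, ⟨b, hb, hts⟩, hs, hP⟩
    obtain ⟨hn, rfl⟩ := (tokState_eq_some_and_isSink_iff hb).1 ⟨hts, hs⟩
    exact ⟨b, hn, hP⟩
  · rintro ⟨b, hn, hP⟩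
    have hb : b ≤ n := hn ▸ Nat.le_add_right _ _
    obtain ⟨hts, hs⟩ := (tokState_eq_some_and_isSink_iff hb).2 ⟨hn, rfl⟩
    exact ⟨_, ⟨b, hb, hts⟩, hs, hP⟩

/-- The subformulas that the slave LTS treats as atoms (those of the form `F`, `G`, `U`,
`G^{⋈p}_ext` not below another such operator) all lie in `Φ`. -/
def TemporalLeavesIn (Φ : Set (FLTL Ap)) : FLTL Ap → Prop
  | .tt | .ff | .atom _ | .natom _ => True
  | .conj χ₁ χ₂ | .disj χ₁ χ₂ => TemporalLeavesIn Φ χ₁ ∧ TemporalLeavesIn Φ χ₂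
  | .next χ => TemporalLeavesIn Φ χ
  | χ => χ ∈ Φ

lemma temporalLeavesIn_RecSet {φ ξ : FLTL Ap} (hξ : subf ξ ⊆ subf φ) (hU : UFree ξ) :
    TemporalLeavesIn (RecSet φ) ξ := by
  induction ξ with
  | conj _ _ ih₁ ih₂ | disj _ _ ih₁ ih₂ =>
    exact ⟨ih₁ (fun _ h => hξ (by simp [subf, h])) hU.1,
      ih₂ (fun _ h => hξ (by simp [subf, h])) hU.2⟩
  | next _ ih => exact ih (fun _ h => hξ (by simp [subf, h])) hU
  | untl => exact hU.elim
  | fut | glob | freq => exact ⟨hξ (by simp [subf]), trivial⟩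
  | _ => trivial

lemma TemporalLeavesIn.step {Φ : Set (FLTL Ap)} {χ : FLTL Ap} (h : TemporalLeavesIn Φ χ)
    (ν : Set Ap) : TemporalLeavesIn Φ (step χ ν) := by
  induction χ with
  | conj _ _ ih₁ ih₂ | disj _ _ ih₁ ih₂ => exact ⟨ih₁ h.1, ih₂ h.2⟩
  | atom a | natom a => simp only [Paper.step]; split <;> trivial
  | _ => exact h

lemma TemporalLeavesIn.slaveRun {Φ : Set (FLTL Ap)} {ξ : FLTL Ap} (h : TemporalLeavesIn Φ ξ)
    (w : Word Ap) (b m : ℕ) : TemporalLeavesIn Φ (slaveRun w ξ b m) := by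
  induction m with
  | zero => exact h
  | succ m ih => exact ih.step _

section Threshold

variable {φ : FLTL Ap} {w : Word Ap}

-- `step` fixes the temporal leaves, and beyond the threshold their truth values are constant.
lemma sat_step_iff {χ : FLTL Ap} {t : ℕ} (ht : threshold φ w ≤ t)
    (hχ : TemporalLeavesIn (RecSet φ) χ) :
    Sat (step χ (w t)) (suffixW w (t + 1)) ↔ Sat χ (suffixW w t) := by
  induction χ with
  | tt | ff => rfl
  | atom a | natom a => by_cases h : a ∈ w t <;> simp [step, h, Sat, suffixW]
  | conj _ _ ih₁ ih₂ => exact and_congr (ih₁ hχ.1) (ih₂ hχ.2)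
  | disj _ _ ih₁ ih₂ => exact or_congr (ih₁ hχ.1) (ih₂ hχ.2)
  | next => simp [step, Sat, suffixW_suffixW]
  | _ =>
    exact (sat_suffixW_iff_mem_Rsat (ht.trans (Nat.le_succ t)) hχ).trans
      (sat_suffixW_iff_mem_Rsat ht hχ).symm

lemma sat_slaveRun_iff {ξ : FLTL Ap} {b : ℕ} (hb : threshold φ w ≤ b)
    (hξ : TemporalLeavesIn (RecSet φ) ξ) (m : ℕ) :
    Sat (slaveRun w ξ b m) (suffixW w (b + m)) ↔ Sat ξ (suffixW w b) := by
  induction m with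
  | zero => rfl
  | succ m ih =>
    exact (sat_step_iff (hb.trans (Nat.le_add_right b m)) (hξ.slaveRun w b m)).trans ih

lemma evalA_mem_Rsat_of_sat {χ : FLTL Ap} {t : ℕ} (ht : threshold φ w ≤ t)
    (hχ : TemporalLeavesIn (RecSet φ) χ) (hsink : isSink χ) (hs : Sat χ (suffixW w t)) :
    evalA (· ∈ Rsat φ w) χ := by
  rw [isSink_iff_nextDepth_eq_zero] at hsink
  induction χ with
  | tt => trivial
  | ff => exact hs
  | atom | natom | next => simp [nextDepth] at hsink
  | conj _ _ ih₁ ih₂ =>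
    rw [nextDepth, Nat.max_eq_zero_iff] at hsink
    exact ⟨ih₁ hχ.1 hsink.1 hs.1, ih₂ hχ.2 hsink.2 hs.2⟩
  | disj _ _ ih₁ ih₂ =>
    rw [nextDepth, Nat.max_eq_zero_iff] at hsink
    exact hs.imp (ih₁ hχ.1 hsink.1) (ih₂ hχ.2 hsink.2)
  | _ => exact (sat_suffixW_iff_mem_Rsat ht hχ).1 hs

end Threshold

lemma pproves_Rsat_sinkState_iff {φ ξ : FLTL Ap} {w : Word Ap} {b : ℕ}
    (hb : threshold φ w ≤ b) (hξ : TemporalLeavesIn (RecSet φ) ξ) :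
    pproves (Rsat φ w) (sinkState w ξ b) ↔ Sat ξ (suffixW w b) := by
  have hrun := sat_slaveRun_iff hb hξ (sinkTime w ξ b)
  have hb' := hb.trans (Nat.le_add_right b (sinkTime w ξ b))
  exact ⟨fun h => hrun.1 (sat_of_pproves_Rsat hb' h), fun h => pproves_of_evalA_mem <|
    evalA_mem_Rsat_of_sat hb' (hξ.slaveRun w b _) (isSink_sinkState w ξ b) (hrun.2 h)⟩

/-! ### The slave automata -/

section Slaves

variable {R : Set (FLTL Ap)} {ξ : FLTL Ap} {w : Word Ap}

lemma buchiAcc_iff : buchiAcc R ξ w ↔ ∃ᶠ b in atTop, pproves R (sinkState w ξ b) := by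
  simp only [buchiAcc, exists_mem_tokenSet_isSink_iff]
  exact frequently_exists_add_eq_iff (sinkTime_le_nextDepth w ξ) _

lemma coBuchiAcc_iff : coBuchiAcc R ξ w ↔ ∀ᶠ b in atTop, pproves R (sinkState w ξ b) := by
  simp only [coBuchiAcc, exists_mem_tokenSet_isSink_iff]
  rw [← not_iff_not, not_eventually, not_eventually]
  simp only [not_not]
  exact frequently_exists_add_eq_iff (sinkTime_le_nextDepth w ξ) _

lemma hasSum_ind_tokState {b n : ℕ} (hb : b ≤ n) :
    HasSum
      (fun ψ : {χ : FLTL Ap // isSink χ ∧ pproves R χ} => ind (tokState ξ w b n = some ψ.1))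
      (if b + sinkTime w ξ b = n then ind (pproves R (sinkState w ξ b)) else 0) := by
  have hiff : ∀ ψ : {χ : FLTL Ap // isSink χ ∧ pproves R χ},
      tokState ξ w b n = some ψ.1 ↔ b + sinkTime w ξ b = n ∧ ψ.1 = sinkState w ξ b :=
    fun ψ => (and_iff_left ψ.2.1).symm.trans (tokState_eq_some_and_isSink_iff hb)
  by_cases h : b + sinkTime w ξ b = n ∧ pproves R (sinkState w ξ b)
  · convert hasSum_ite_eq (⟨sinkState w ξ b, isSink_sinkState w ξ b, h.2⟩ :
      {χ : FLTL Ap // isSink χ ∧ pproves R χ}) (1 : ℝ) using 1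
    · funext ψ
      simp [ind, hiff, h.1, Subtype.ext_iff]
    · simp [ind, h]
  · convert hasSum_zero with ψ
    · rw [ind, if_neg fun hts => h ⟨((hiff ψ).1 hts).1, ((hiff ψ).1 hts).2 ▸ ψ.2.2⟩]
    · unfold ind
      split_ifs <;> simp_all

lemma mpRewardFn_tokenCount (n : ℕ) :
    mpRewardFn R (tokenCount ξ w n) = ∑ b ∈ Finset.range (n + 1),
      if b + sinkTime w ξ b = n then ind (pproves R (sinkState w ξ b)) else 0 := by
  simp only [mpRewardFn, tokenCount, Finset.natCast_card_filter]
  convert (hasSum_sum (s := Finset.range (n + 1)) fun b hb =>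
    hasSum_ind_tokState (Nat.lt_add_one_iff.1 (Finset.mem_range.1 hb))).tsum_eq using 4
  unfold ind
  congr

lemma lr_mpReward (e : Ext) :
    lr e (fun n => mpRewardFn R (tokenCount ξ w n)) =
      lr e (fun b => ind (pproves R (sinkState w ξ b))) := by
  simp only [mpRewardFn_tokenCount]
  exact lr_delay (sinkTime_le_nextDepth w ξ) (fun _ => abs_ind_le_one _) e

end Slaves

section Correctness

variable {φ ξ : FLTL Ap} {w : Word Ap} {Rlo Rhi : Set (FLTL Ap)}

lemma eventually_pproves_Rsat_sinkState_iff (hξ : TemporalLeavesIn (RecSet φ) ξ) :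
    ∀ᶠ b in atTop, pproves (Rsat φ w) (sinkState w ξ b) ↔ Sat ξ (suffixW w b) :=
  (eventually_ge_atTop _).mono fun _ hb => pproves_Rsat_sinkState_iff hb hξ

lemma buchiAcc_correct (hξ : TemporalLeavesIn (RecSet φ) ξ) (hlo : Rlo ⊆ Rsat φ w)
    (hhi : Rsat φ w ⊆ Rhi) :
    (buchiAcc Rlo ξ w → Sat (.glob (.fut ξ)) w) ∧
      (Sat (.glob (.fut ξ)) w → buchiAcc Rhi ξ w) := by
  simp only [buchiAcc_iff, sat_glob_fut_iff,
    ← frequently_congr (eventually_pproves_Rsat_sinkState_iff hξ)]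
  exact ⟨(·.mono fun _ => pproves_mono hlo), (·.mono fun _ => pproves_mono hhi)⟩

lemma coBuchiAcc_correct (hξ : TemporalLeavesIn (RecSet φ) ξ) (hlo : Rlo ⊆ Rsat φ w)
    (hhi : Rsat φ w ⊆ Rhi) :
    (coBuchiAcc Rlo ξ w → Sat (.fut (.glob ξ)) w) ∧
      (Sat (.fut (.glob ξ)) w → coBuchiAcc Rhi ξ w) := by
  simp only [coBuchiAcc_iff, sat_fut_glob_iff,
    ← eventually_congr (eventually_pproves_Rsat_sinkState_iff hξ)]
  exact ⟨(·.mono fun _ => pproves_mono hlo), (·.mono fun _ => pproves_mono hhi)⟩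

lemma mpAcc_correct (hξ : TemporalLeavesIn (RecSet φ) ξ) (hlo : Rlo ⊆ Rsat φ w)
    (hhi : Rsat φ w ⊆ Rhi) (e : Ext) (c : Cmp) (p : ℚ) :
    (mpAcc Rlo ξ w e c p → Sat (.freq e c p ξ) w) ∧
      (Sat (.freq e c p ξ) w → mpAcc Rhi ξ w e c p) := by
  have hRsat : lr e (fun b => ind (pproves (Rsat φ w) (sinkState w ξ b))) =
      lr e (fun b => ind (Sat ξ (suffixW w b))) :=
    lr_eq_of_eventuallyEq (fun _ => abs_ind_le_one _)
      ((eventually_pproves_Rsat_sinkState_iff hξ).mono fun _ h => by rw [h]) e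
  have hmono {R R' : Set (FLTL Ap)} (h : R ⊆ R') :
      lr e (fun b => ind (pproves R (sinkState w ξ b))) ≤
        lr e (fun b => ind (pproves R' (sinkState w ξ b))) :=
    lr_mono (fun _ => ind_mono (pproves_mono h)) (fun _ => abs_ind_le_one _)
      (fun _ => abs_ind_le_one _) e
  simp only [mpAcc, lr_mpReward, Sat, ← hRsat]
  exact ⟨Cmp.rel_mono (hmono hlo), Cmp.rel_mono (hmono hhi)⟩

end Correctness

theorem slaves_correct_general {Ap : Type} (φ : FLTL Ap)
    (ξ : FLTL Ap) (hξ : ξ ∈ sfSet φ) (hU : UFree ξ) (w : Word Ap)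
    (Rlo Rhi : Set (FLTL Ap))
    (hlo : Rlo ⊆ Rsat φ w) (hhi : Rsat φ w ⊆ Rhi) :
    ((buchiAcc Rlo ξ w → Sat (.glob (.fut ξ)) w) ∧
      (Sat (.glob (.fut ξ)) w → buchiAcc Rhi ξ w)) ∧
    ((coBuchiAcc Rlo ξ w → Sat (.fut (.glob ξ)) w) ∧
      (Sat (.fut (.glob ξ)) w → coBuchiAcc Rhi ξ w)) ∧
    (∀ (e : Ext) (c : Cmp) (p : ℚ),
      (mpAcc Rlo ξ w e c p → Sat (.freq e c p ξ) w) ∧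
      (Sat (.freq e c p ξ) w → mpAcc Rhi ξ w e c p)) := by
  have hleaves := temporalLeavesIn_RecSet (subf_subset_of_mem hξ.1) hU
  exact ⟨buchiAcc_correct hleaves hlo hhi, coBuchiAcc_correct hleaves hlo hhi,
    mpAcc_correct hleaves hlo hhi⟩

/-- Lemma 4 (correctness of the slave automata). -/
theorem slaves_correct {Ap : Type} [Fintype Ap] (φ : FLTL Ap) (hφ : InFrag φ)
    (ξ : FLTL Ap) (hξ : ξ ∈ sfSet φ) (hU : UFree ξ) (w : Word Ap)
    (Rlo Rhi : Set (FLTL Ap)) (hloRec : Rlo ⊆ RecSet φ) (hhiRec : Rhi ⊆ RecSet φ)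
    (hlo : Rlo ⊆ Rsat φ w) (hhi : Rsat φ w ⊆ Rhi) :
    ((buchiAcc Rlo ξ w → Sat (.glob (.fut ξ)) w) ∧
      (Sat (.glob (.fut ξ)) w → buchiAcc Rhi ξ w)) ∧
    ((coBuchiAcc Rlo ξ w → Sat (.fut (.glob ξ)) w) ∧
      (Sat (.fut (.glob ξ)) w → coBuchiAcc Rhi ξ w)) ∧
    (∀ (e : Ext) (c : Cmp) (p : ℚ),
      (mpAcc Rlo ξ w e c p → Sat (.freq e c p ξ) w) ∧
      (Sat (.freq e c p ξ) w → mpAcc Rhi ξ w e c p)) :=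
  slaves_correct_general φ ξ hξ hU w Rlo Rhi hlo hhi

end Paper

end
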